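/- If a : ℕ → ℝ satisfies |a(n)| ≤ d₄(n) for all n, and x₁ < x₂ are reals with S(x₂) - S(x₁) > 2c·x^{3/8} where S(y) = Σ_{n≤y} a(n) and x₁, x₂ ≤ 2x, then for every ε > 0 the number of integers n ∈ (x₁, x₂] with a(n) > 0 is at least c'·x^{3/8-ε} for some constant c' > 0 depending only on ε and c, provided x is sufficiently large. -/

import Mathlib

/-- `d₄ n`: number of quadruples `(a,b,c,d)` of positive integers with `a*b*c*d = n`. -/
def d4 (n : ℕ) : ℕ :=
  ((Finset.Icc 1 n ×ˢ Finset.Icc 1 n ×ˢ Finset.Icc 1 n ×ˢ Finset.Icc 1 n).filter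
    (fun p => p.1 * p.2.1 * p.2.2.1 * p.2.2.2 = n)).card

/-- Summatory function `S(y) = ∑_{n ≤ y} a(n)`. -/
noncomputable def Ssum (a : ℕ → ℝ) (y : ℝ) : ℝ := ∑ n ∈ Finset.Icc 1 ⌊y⌋₊, a n

/-!
Each positive term of `S(x₂) - S(x₁) = ∑_{x₁ < n ≤ x₂} a(n)` is at most `d₄(n) ≤ C n^ε ≤ C (2x)^ε`,
while the non-positive terms only decrease the sum; since the sum exceeds `2c x^{3/8}`, there are
at least `2c x^{3/8} / (C (2x)^ε)` positive terms.

The bound `d₄(n) ≪ n^ε` follows from `d₄ ≤ τ³` and the divisor bound `τ(n) ≪ n^δ`, which is proved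
prime by prime: `k + 1 ≤ (p^δ)^k` as soon as `p^δ ≥ 2`, and Bernoulli's inequality gives
`k + 1 ≤ (p^δ - 1)⁻¹ (p^δ)^k` for the finitely many smaller primes.
-/

open Finset

lemma d4_le_card_divisors_pow_three {n : ℕ} (hn : n ≠ 0) : d4 n ≤ #n.divisors ^ 3 := by
  rw [show #n.divisors ^ 3 = #(n.divisors ×ˢ n.divisors ×ˢ n.divisors) by
    simp only [card_product]; ring]
  refine card_le_card_of_injOn (fun p => (p.1, p.2.1, p.2.2.1)) ?_ ?_
  · rintro ⟨a, b, c, d⟩ hp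
    simp only [coe_filter, Set.mem_ofPred_eq, mem_product, mem_Icc] at hp
    simp only [coe_product, Set.mem_prod, mem_coe, Nat.mem_divisors]
    exact ⟨⟨⟨b * c * d, by rw [← hp.2]; ring⟩, hn⟩, ⟨⟨a * c * d, by rw [← hp.2]; ring⟩, hn⟩,
      ⟨⟨a * b * d, by rw [← hp.2]; ring⟩, hn⟩⟩
  · rintro ⟨a, b, c, d⟩ hp ⟨a', b', c', d'⟩ hq heq
    simp only [coe_filter, Set.mem_ofPred_eq, mem_product, mem_Icc] at hp hq
    simp only [Prod.mk.injEq] at heq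
    obtain ⟨rfl, rfl, rfl⟩ := heq
    obtain ⟨⟨⟨ha, -⟩, ⟨hb, -⟩, ⟨hc, -⟩, -⟩, hprod⟩ := hp
    have habc : 0 < a * b * c := by positivity
    simp [Nat.eq_of_mul_eq_mul_left habc (hprod.trans hq.2.symm)]

lemma natCast_add_one_le_max_mul_pow {t : ℝ} (ht : 1 < t) (k : ℕ) :
    (k : ℝ) + 1 ≤ max 1 (t - 1)⁻¹ * t ^ k := by
  set M := max 1 (t - 1)⁻¹
  have hM : 1 ≤ M * (t - 1) := by
    calc (1 : ℝ) = (t - 1)⁻¹ * (t - 1) := (inv_mul_cancel₀ (by linarith)).symm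
      _ ≤ M * (t - 1) := mul_le_mul_of_nonneg_right (le_max_right _ _) (by linarith)
  have hBernoulli : 1 + k * (t - 1) ≤ t ^ k := by
    simpa using one_add_mul_le_pow (by linarith : -2 ≤ t - 1) k
  calc (k : ℝ) + 1 ≤ M + k * (M * (t - 1)) := by
        nlinarith [le_max_left 1 (t - 1)⁻¹, (k.cast_nonneg : (0 : ℝ) ≤ k)]
    _ = M * (1 + k * (t - 1)) := by ring
    _ ≤ M * t ^ k := by gcongr

lemma prod_primeFactors_rpow_pow_factorization {n : ℕ} (hn : n ≠ 0) (δ : ℝ) :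
    ∏ p ∈ n.primeFactors, ((p : ℝ) ^ δ) ^ n.factorization p = (n : ℝ) ^ δ := by
  simp_rw [Real.rpow_pow_comm (Nat.cast_nonneg _)]
  rw [Real.finsetProd_rpow _ _ (fun _ _ => by positivity)]
  conv_rhs => rw [Nat.prod_primeFactors_pow_factorization hn]
  push_cast
  rfl

theorem card_divisors_le_mul_rpow {δ : ℝ} (hδ : 0 < δ) :
    ∃ C > 0, ∀ n : ℕ, n ≠ 0 → (#n.divisors : ℝ) ≤ C * (n : ℝ) ^ δ := by
  set g : ℕ → ℝ := fun p => max 1 ((p : ℝ) ^ δ - 1)⁻¹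
  set N := ⌈(2 : ℝ) ^ δ⁻¹⌉₊
  have hg_one : 1 ≤ g := fun p => le_max_left _ _
  have hg_eq_one : ∀ p, N ≤ p → g p = 1 := by
    intro p hp
    have : 2 ≤ (p : ℝ) ^ δ := by
      rw [← Real.rpow_inv_le_iff_of_pos zero_le_two p.cast_nonneg hδ]
      exact (Nat.le_ceil _).trans (by exact_mod_cast hp)
    exact max_eq_left (inv_le_one_of_one_le₀ (by linarith))
  refine ⟨∏ p ∈ range N, g p, prod_pos fun p _ => zero_lt_one.trans_le (hg_one p), ?_⟩
  intro n hn
  have hlocal : ∀ p ∈ n.primeFactors, (n.factorization p : ℝ) + 1 ≤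
      g p * ((p : ℝ) ^ δ) ^ n.factorization p := fun p hp =>
    natCast_add_one_le_max_mul_pow
      (Real.one_lt_rpow (mod_cast (Nat.prime_of_mem_primeFactors hp).one_lt) hδ) _
  have hsmall : ∏ p ∈ n.primeFactors, g p ≤ ∏ p ∈ range N, g p := by
    rw [← prod_filter_of_ne (p := (· < N)) fun p _ hp => by
      by_contra h; exact hp (hg_eq_one p (not_lt.1 h))]
    refine prod_le_prod_of_subset_of_one_le (fun p hp => mem_range.2 (mem_filter.1 hp).2)
      (fun p _ => zero_le_one.trans (hg_one p)) fun p _ _ => hg_one p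
  calc (#n.divisors : ℝ) = ∏ p ∈ n.primeFactors, ((n.factorization p : ℝ) + 1) := by
        rw [Nat.card_divisors hn]; push_cast; rfl
    _ ≤ ∏ p ∈ n.primeFactors, g p * ((p : ℝ) ^ δ) ^ n.factorization p :=
        prod_le_prod (fun _ _ => by positivity) hlocal
    _ = (∏ p ∈ n.primeFactors, g p) * (n : ℝ) ^ δ := by
        rw [prod_mul_distrib, prod_primeFactors_rpow_pow_factorization hn]
    _ ≤ (∏ p ∈ range N, g p) * (n : ℝ) ^ δ := by gcongr

theorem d4_le_mul_rpow {ε : ℝ} (hε : 0 < ε) :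
    ∃ C > 0, ∀ n : ℕ, n ≠ 0 → (d4 n : ℝ) ≤ C * (n : ℝ) ^ ε := by
  obtain ⟨C, hC, hτ⟩ := card_divisors_le_mul_rpow (div_pos hε three_pos)
  refine ⟨C ^ 3, by positivity, fun n hn => ?_⟩
  calc (d4 n : ℝ) ≤ (#n.divisors : ℝ) ^ 3 := by exact_mod_cast d4_le_card_divisors_pow_three hn
    _ ≤ (C * (n : ℝ) ^ (ε / 3)) ^ 3 := by gcongr; exact hτ n hn
    _ = C ^ 3 * (n : ℝ) ^ ε := by
        rw [mul_pow, ← Real.rpow_mul_natCast n.cast_nonneg]; norm_num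

lemma Ssum_sub_Ssum (a : ℕ → ℝ) {x₁ x₂ : ℝ} (h : x₁ ≤ x₂) :
    Ssum a x₂ - Ssum a x₁ = ∑ n ∈ Ioc ⌊x₁⌋₊ ⌊x₂⌋₊, a n := by
  rw [Ssum, Ssum, sub_eq_iff_eq_add']
  exact (sum_Ioc_consecutive a (Nat.zero_le _) (Nat.floor_le_floor h)).symm

lemma sum_le_card_filter_pos_mul {ι : Type*} (s : Finset ι) (f : ι → ℝ) {M : ℝ}
    (hM : ∀ i ∈ s, 0 < f i → f i ≤ M) : ∑ i ∈ s, f i ≤ #(s.filter (0 < f ·)) * M := by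
  calc ∑ i ∈ s, f i ≤ ∑ i ∈ s.filter (0 < f ·), f i := by
        rw [← sum_filter_add_sum_filter_not s (0 < f ·)]
        exact add_le_of_nonpos_right (sum_nonpos fun i hi => not_lt.1 (mem_filter.1 hi).2)
    _ ≤ #(s.filter (0 < f ·)) * M := by
        rw [← nsmul_eq_mul]
        exact sum_le_card_nsmul _ _ _ fun i hi => hM i (mem_filter.1 hi).1 (mem_filter.1 hi).2

theorem stmt3 (a : ℕ → ℝ) (c : ℝ) (hc : 0 < c)
    (hbound : ∀ n : ℕ, |a n| ≤ (d4 n : ℝ)) :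
    ∀ ε > (0:ℝ), ∃ c' > (0:ℝ), ∃ x₀ : ℝ, ∀ x ≥ x₀, ∀ x₁ x₂ : ℝ,
      x₁ < x₂ → x₁ ≤ 2 * x → x₂ ≤ 2 * x →
      Ssum a x₂ - Ssum a x₁ > 2 * c * x ^ ((3:ℝ)/8) →
      c' * x ^ ((3:ℝ)/8 - ε) ≤
        (((Finset.Ioc ⌊x₁⌋₊ ⌊x₂⌋₊).filter (fun n => 0 < a n)).card : ℝ) := by
  intro ε hε
  obtain ⟨C, hC, hd4⟩ := d4_le_mul_rpow hε
  refine ⟨2 * c / (C * 2 ^ ε), by positivity, 1, fun x hx x₁ x₂ h12 _ hx₂ hS => ?_⟩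
  have hx0 : 0 < x := one_pos.trans_le hx
  have hterm : ∀ n ∈ Ioc ⌊x₁⌋₊ ⌊x₂⌋₊, 0 < a n → a n ≤ C * 2 ^ ε * x ^ ε := by
    intro n hn _
    have hn0 : n ≠ 0 := Nat.ne_zero_of_lt (mem_Ioc.1 hn).1
    have hn2x : (n : ℝ) ≤ 2 * x := ((Nat.le_floor_iff' hn0).1 (mem_Ioc.1 hn).2).trans hx₂
    calc a n ≤ d4 n := (le_abs_self _).trans (hbound n)
      _ ≤ C * (n : ℝ) ^ ε := hd4 n hn0
      _ ≤ C * (2 * x) ^ ε := by gcongr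
      _ = C * 2 ^ ε * x ^ ε := by rw [Real.mul_rpow zero_le_two hx0.le, mul_assoc]
  have hcount := hS.le.trans <|
    (Ssum_sub_Ssum a h12.le).le.trans (sum_le_card_filter_pos_mul _ _ hterm)
  rw [Real.rpow_sub hx0, div_mul_div_comm, div_le_iff₀ (by positivity)]
  simpa only [mul_assoc] using hcount
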